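/- arXiv:math/0504169 — 2 statements merged into one kernel-verified Lean document; each statement's English description precedes it below -/
import Mathlib

section
/- For vectors ξ₁, ξ₂ ∈ ℝ³ with ξ₁ ∧ ξ₂ ≠ 0, set ν = (ξ₁ ∧ ξ₂)/|ξ₁ ∧ ξ₂|. Then |(ξ₁ + ν) ∧ (ξ₂ + ν)| ≥ |ξ₁ - ξ₂| and |(ξ₁ - ν) ∧ (ξ₂ - ν)| ≥ |ξ₁ - ξ₂|. -/
open scoped ENNReal
noncomputable section

def enorm3 (a : Fin 3 → ℝ) : ℝ := Real.sqrt (a 0 ^ 2 + a 1 ^ 2 + a 2 ^ 2)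

def dot3 (a b : Fin 3 → ℝ) : ℝ := a 0 * b 0 + a 1 * b 1 + a 2 * b 2

def cross3 (a b : Fin 3 → ℝ) : Fin 3 → ℝ :=
  ![a 1 * b 2 - a 2 * b 1, a 2 * b 0 - a 0 * b 2, a 0 * b 1 - a 1 * b 0]

def col3 (a b c : Fin 3 → ℝ) : Matrix (Fin 3) (Fin 3) ℝ :=
  Matrix.of fun i => ![a i, b i, c i]

def frob3 (F : Matrix (Fin 3) (Fin 3) ℝ) : ℝ := Real.sqrt (∑ i, ∑ j, F i j ^ 2)

def pnorm32 (ξ : (Fin 3 → ℝ) × (Fin 3 → ℝ)) : ℝ :=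
  Real.sqrt (enorm3 ξ.1 ^ 2 + enorm3 ξ.2 ^ 2)

lemma key3 (a b v : Fin 3 → ℝ) (h1 : dot3 v a = 0) (h2 : dot3 v b = 0) (hv : dot3 v v = 1) :
    (cross3 (a+v) (b+v) 0)^2 + (cross3 (a+v) (b+v) 1)^2 + (cross3 (a+v) (b+v) 2)^2
    = ((a-b) 0)^2 + ((a-b) 1)^2 + ((a-b) 2)^2
      + ((cross3 a b 0)^2 + (cross3 a b 1)^2 + (cross3 a b 2)^2) := by
  simp only [cross3, dot3, Pi.add_apply, Pi.sub_apply, Matrix.cons_val_zero,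
    Matrix.cons_val_one, Matrix.head_cons, Matrix.cons_val_two, Matrix.tail_cons] at *
  linear_combination (-2*(b 0*(a 0 - b 0)+b 1*(a 1 - b 1)+b 2*(a 2 - b 2))
      - ((a 0 - b 0)*v 0+(a 1 - b 1)*v 1+(a 2 - b 2)*v 2))*h1
    + (2*(a 0*(a 0 - b 0)+a 1*(a 1 - b 1)+a 2*(a 2 - b 2))
      + ((a 0 - b 0)*v 0+(a 1 - b 1)*v 1+(a 2 - b 2)*v 2))*h2
    + ((a 0 - b 0)^2+(a 1 - b 1)^2+(a 2 - b 2)^2)*hv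

lemma key3' (a b v : Fin 3 → ℝ) (h1 : dot3 v a = 0) (h2 : dot3 v b = 0) (hv : dot3 v v = 1) :
    enorm3 (a - b) ≤ enorm3 (cross3 (a+v) (b+v)) := by
  unfold enorm3
  apply Real.sqrt_le_sqrt
  rw [key3 a b v h1 h2 hv]
  nlinarith [sq_nonneg (cross3 a b 0), sq_nonneg (cross3 a b 1), sq_nonneg (cross3 a b 2)]

/-- with `ν = (ξ₁ ∧ ξ₂)/|ξ₁ ∧ ξ₂|`,
`|(ξ₁+ν) ∧ (ξ₂+ν)| ≥ |ξ₁ - ξ₂|` and `|(ξ₁-ν) ∧ (ξ₂-ν)| ≥ |ξ₁ - ξ₂|`. -/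
theorem stmt3 (ξ₁ ξ₂ : Fin 3 → ℝ) (h : cross3 ξ₁ ξ₂ ≠ 0) :
    let ν := (enorm3 (cross3 ξ₁ ξ₂))⁻¹ • cross3 ξ₁ ξ₂
    enorm3 (ξ₁ - ξ₂) ≤ enorm3 (cross3 (ξ₁ + ν) (ξ₂ + ν)) ∧
    enorm3 (ξ₁ - ξ₂) ≤ enorm3 (cross3 (ξ₁ - ν) (ξ₂ - ν)) := by
  intro ν
  set c := cross3 ξ₁ ξ₂ with hc
  have hs : 0 < c 0 ^ 2 + c 1 ^ 2 + c 2 ^ 2 := by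
    rcases lt_or_eq_of_le (by positivity : (0:ℝ) ≤ c 0 ^ 2 + c 1 ^ 2 + c 2 ^ 2) with h' | h'
    · exact h'
    · exfalso; apply h; funext i
      have g0 : c 0 = 0 := by nlinarith [sq_nonneg (c 0), sq_nonneg (c 1), sq_nonneg (c 2)]
      have g1 : c 1 = 0 := by nlinarith [sq_nonneg (c 0), sq_nonneg (c 1), sq_nonneg (c 2)]
      have g2 : c 2 = 0 := by nlinarith [sq_nonneg (c 0), sq_nonneg (c 1), sq_nonneg (c 2)]
      fin_cases i
      exacts [g0, g1, g2]
  have hn : 0 < enorm3 c := Real.sqrt_pos.mpr hs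
  have hn2 : enorm3 c ^ 2 = c 0 ^ 2 + c 1 ^ 2 + c 2 ^ 2 := Real.sq_sqrt hs.le
  have hν : ∀ i, ν i = (enorm3 c)⁻¹ * c i := fun i => rfl
  have h1 : dot3 ν ξ₁ = 0 := by
    simp only [dot3, hν, hc, cross3, Matrix.cons_val_zero, Matrix.cons_val_one,
      Matrix.head_cons, Matrix.cons_val_two, Matrix.tail_cons]
    ring
  have h2 : dot3 ν ξ₂ = 0 := by
    simp only [dot3, hν, hc, cross3, Matrix.cons_val_zero, Matrix.cons_val_one,
      Matrix.head_cons, Matrix.cons_val_two, Matrix.tail_cons]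
    ring
  have hv : dot3 ν ν = 1 := by
    simp only [dot3, hν]
    field_simp
    linarith [hn2]
  constructor
  · exact key3' ξ₁ ξ₂ ν h1 h2 hv
  · have e1 : ξ₁ - ν = ξ₁ + (-ν) := by ring
    have e2 : ξ₂ - ν = ξ₂ + (-ν) := by ring
    rw [e1, e2]
    simp only [dot3] at h1 h2 hv
    refine key3' ξ₁ ξ₂ (-ν) ?_ ?_ ?_ <;> simp only [dot3, Pi.neg_apply]
    · linear_combination -h1
    · linear_combination -h2
    · linear_combination hv
end
end

section
/- Let Σ ⊂ ℝ² be a bounded open set and W₀ : M^{3×2} → [0,∞] a Borel function with W₀(ξ) ≥ C|ξ|^p for all ξ (C > 0, p > 1). Let 𝓘̄ be the L^p-lower-semicontinuous relaxation (sequential) of v ↦ ∫_Σ W₀(∇v) dx restricted to continuous piecewise affine v (value +∞ elsewhere), and let 𝓙(v) = inf{ liminf_n ∫_Σ ZW₀(∇v_n) dx : piecewise affine v_n → v in L^p } where ZW₀(ξ) = inf{ ∫_Y W₀(ξ + ∇φ(y)) dy : φ continuous piecewise affine on Y = (0,1)², φ = 0 on ∂Y }. If for every piecewise affine v one has 𝓘̄(v)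 ≤ ∫_Σ ZW₀(∇v) dx, then 𝓘̄ = 𝓙 on W^{1,p}(Σ;ℝ³). -/
open scoped ENNReal
open MeasureTheory
noncomputable section

/-- Three-dimensional Euclidean space. -/
abbrev V3 := EuclideanSpace ℝ (Fin 3)

/-- `v` is continuous piecewise affine on `S`: continuous, and there is a finite family of
disjoint open subsets of `S` with negligible boundaries covering `S` up to a null set, on
each of which the gradient of `v` is constant. -/
def IsPA (S : Set (ℝ × ℝ)) (v : ℝ × ℝ → V3) : Prop :=
  ContinuousOn v S ∧
  ∃ (n : ℕ) (D : Fin n → Set (ℝ × ℝ)) (ξ : Fin n → (ℝ × ℝ) →L[ℝ] V3),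
    (∀ i, IsOpen (D i) ∧ D i ⊆ S ∧ volume (frontier (D i)) = 0) ∧
    (∀ i j, i ≠ j → Disjoint (D i) (D j)) ∧
    volume (S \ ⋃ i, D i) = 0 ∧
    ∀ i, ∀ x ∈ D i, fderiv ℝ v x = ξ i

/-- The open unit square `Y = (0,1)²`. -/
def Ysq : Set (ℝ × ℝ) := Set.Ioo (0:ℝ) 1 ×ˢ Set.Ioo (0:ℝ) 1

/-- `ZW₀(ξ)`: infimum of `∫_Y W₀(ξ + ∇φ)` over continuous piecewise affine `φ`
vanishing on `∂Y`. -/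
def ZW (W₀ : ((ℝ × ℝ) →L[ℝ] V3) → ℝ≥0∞) (ξ : (ℝ × ℝ) →L[ℝ] V3) : ℝ≥0∞ :=
  ⨅ (φ : ℝ × ℝ → V3) (_ : IsPA Ysq φ ∧ ∀ x ∈ frontier Ysq, φ x = 0),
    ∫⁻ y in Ysq, W₀ (ξ + fderiv ℝ φ y)

open Classical in
/-- The functional `𝓘`: `∫_S W₀(∇v)` on piecewise affine maps, `+∞` elsewhere. -/
def Ifun (S : Set (ℝ × ℝ)) (W₀ : ((ℝ × ℝ) →L[ℝ] V3) → ℝ≥0∞) (v : ℝ × ℝ → V3) : ℝ≥0∞ :=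
  if IsPA S v then ∫⁻ x in S, W₀ (fderiv ℝ v x) else ⊤

/-- Strong `L^p(S)` convergence of a sequence of maps. -/
def LpTendsto (S : Set (ℝ × ℝ)) (p : ℝ) (vs : ℕ → ℝ × ℝ → V3) (v : ℝ × ℝ → V3) : Prop :=
  Filter.Tendsto
    (fun n => eLpNorm (fun x => vs n x - v x) (ENNReal.ofReal p) (volume.restrict S))
    Filter.atTop (nhds 0)

/-- The (sequential) `L^p`-lower semicontinuous relaxation `𝓘̄` of `𝓘`. -/
def RelaxI (S : Set (ℝ × ℝ)) (W₀ : ((ℝ × ℝ) →L[ℝ] V3) → ℝ≥0∞) (p : ℝ)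
    (v : ℝ × ℝ → V3) : ℝ≥0∞ :=
  ⨅ (vs : ℕ → ℝ × ℝ → V3) (_ : LpTendsto S p vs v),
    Filter.liminf (fun n => Ifun S W₀ (vs n)) Filter.atTop

/-- The functional `𝓙`, defined via `ZW₀` along piecewise affine approximating
sequences. -/
def Jfun (S : Set (ℝ × ℝ)) (W₀ : ((ℝ × ℝ) →L[ℝ] V3) → ℝ≥0∞) (p : ℝ)
    (v : ℝ × ℝ → V3) : ℝ≥0∞ :=
  ⨅ (vs : ℕ → ℝ × ℝ → V3) (_ : (∀ n, IsPA S (vs n)) ∧ LpTendsto S p vs v),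
    Filter.liminf (fun n => ∫⁻ x in S, ZW W₀ (fderiv ℝ (vs n) x)) Filter.atTop


section Aux

open Filter

lemma inv_succ_pos (k : ℕ) : (0:ℝ≥0∞) < (↑(k+1))⁻¹ :=
  ENNReal.inv_pos.mpr (ENNReal.natCast_ne_top (k+1))

lemma lt_add_inv (L : ℝ≥0∞) (hL : L ≠ ⊤) (k : ℕ) : L < L + (↑(k+1):ℝ≥0∞)⁻¹ :=
  ENNReal.lt_add_right hL (inv_succ_pos k).ne'

lemma tendsto_inv_succ : Tendsto (fun k : ℕ => ((↑(k+1):ℝ≥0∞))⁻¹) atTop (nhds 0) :=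
  ENNReal.tendsto_inv_nat_nhds_zero.comp (tendsto_add_atTop_nat 1)

lemma exists_subseq_lt (u : ℕ → ℝ≥0∞) (L : ℝ≥0∞) (hL : L ≠ ⊤)
    (h : Filter.liminf u Filter.atTop ≤ L) :
    ∃ φ : ℕ → ℕ, StrictMono φ ∧ ∀ k, u (φ k) < L + (↑(k+1) : ℝ≥0∞)⁻¹ := by
  have freq : ∀ k N : ℕ, ∃ n, n ≥ N ∧ u n < L + (↑(k+1):ℝ≥0∞)⁻¹ := by
    intro k N
    have : ∃ᶠ n in atTop, u n < L + (↑(k+1):ℝ≥0∞)⁻¹ :=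
      Filter.frequently_lt_of_liminf_lt (h := h.trans_lt (lt_add_inv L hL k))
    obtain ⟨n, hn, hn2⟩ := (Filter.frequently_atTop.mp this) N
    exact ⟨n, hn, hn2⟩
  choose f hf1 hf2 using freq
  refine ⟨fun k => Nat.rec (f 0 0) (fun k ih => f (k+1) (ih+1)) k,
    strictMono_nat_of_lt_succ (fun n => Nat.lt_of_succ_le (hf1 (n+1) _)), fun k => ?_⟩
  cases k with
  | zero => exact hf2 0 0
  | succ k => exact hf2 (k+1) _

lemma liminf_le_of_le_add_inv (u : ℕ → ℝ≥0∞) (L : ℝ≥0∞)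
    (h : ∀ k, u k ≤ L + (↑(k+1):ℝ≥0∞)⁻¹) :
    Filter.liminf u Filter.atTop ≤ L := by
  calc Filter.liminf u Filter.atTop
      ≤ Filter.liminf (fun k : ℕ => L + (↑(k+1):ℝ≥0∞)⁻¹) Filter.atTop :=
        Filter.liminf_le_liminf (Filter.Eventually.of_forall h)
    _ = L := by
        have h2 : Filter.Tendsto (fun k : ℕ => L + (↑(k+1):ℝ≥0∞)⁻¹) Filter.atTop (nhds (L+0)) :=
          Filter.Tendsto.const_add L tendsto_inv_succ
        rw [add_zero] at h2
        exact h2.liminf_eq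

/-- One-sided Minkowski inequality: the triangle inequality for `eLpNorm` assuming
measurability of only one of the two summands. -/
lemma eLpNorm_triangle_left {α : Type*} [MeasurableSpace α] {μ : Measure α} {q : ℝ≥0∞}
    (hq0 : q ≠ 0) (hqt : q ≠ ⊤) (hq1 : 1 ≤ q.toReal)
    (f g : α → V3) (hf : AEStronglyMeasurable f μ) :
    eLpNorm (fun x => f x + g x) q μ ≤ eLpNorm f q μ + eLpNorm g q μ := by
  set r := q.toReal with hr
  have hr0 : 0 < r := lt_of_lt_of_le zero_lt_one hq1
  rw [eLpNorm_eq_lintegral_rpow_enorm_toReal hq0 hqt, eLpNorm_eq_lintegral_rpow_enorm_toReal hq0 hqt,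
      eLpNorm_eq_lintegral_rpow_enorm_toReal hq0 hqt]
  obtain ⟨m, hm, hmle, hmeq⟩ :=
    exists_measurable_le_lintegral_eq μ (fun x => (‖f x + g x‖₊ : ℝ≥0∞) ^ r)
  rw [← hr]; simp only [enorm_eq_nnnorm]
  rw [hmeq]
  set φ : α → ℝ≥0∞ := fun x => m x ^ (1/r) with hφdef
  have hφmeas : Measurable φ := hm.pow_const _
  have hφr : ∀ x, φ x ^ r = m x := by
    intro x
    rw [hφdef, ← ENNReal.rpow_mul, one_div, inv_mul_cancel₀ hr0.ne', ENNReal.rpow_one]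
  have hφle : ∀ x, φ x ≤ (‖f x‖₊ : ℝ≥0∞) + (‖g x‖₊ : ℝ≥0∞) := by
    intro x
    have h1 : φ x ≤ ((‖f x + g x‖₊ : ℝ≥0∞) ^ r) ^ (1/r) :=
      ENNReal.rpow_le_rpow (hmle x) (by positivity)
    rw [← ENNReal.rpow_mul, mul_one_div_cancel hr0.ne', ENNReal.rpow_one] at h1
    refine h1.trans ?_
    exact_mod_cast nnnorm_add_le (f x) (g x)
  set ψ : α → ℝ≥0∞ := fun x => φ x - (‖f x‖₊ : ℝ≥0∞) with hψdef
  have hψmeas : AEMeasurable ψ μ := hφmeas.aemeasurable.sub hf.enorm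
  have hψle : ∀ x, ψ x ≤ (‖g x‖₊ : ℝ≥0∞) := fun x => tsub_le_iff_left.mpr (hφle x)
  have hφle' : ∀ x, φ x ≤ ψ x + (‖f x‖₊ : ℝ≥0∞) := fun x => le_tsub_add
  calc (∫⁻ x, m x ∂μ) ^ (1/r)
      ≤ (∫⁻ x, (ψ x + (‖f x‖₊ : ℝ≥0∞)) ^ r ∂μ) ^ (1/r) := by
        refine ENNReal.rpow_le_rpow (lintegral_mono fun x => ?_) (by positivity)
        rw [← hφr x]
        exact ENNReal.rpow_le_rpow (hφle' x) hr0.le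
    _ ≤ (∫⁻ x, ψ x ^ r ∂μ) ^ (1/r) + (∫⁻ x, (‖f x‖₊ : ℝ≥0∞) ^ r ∂μ) ^ (1/r) :=
        ENNReal.lintegral_Lp_add_le hψmeas hf.enorm hq1
    _ ≤ (∫⁻ x, (‖g x‖₊ : ℝ≥0∞) ^ r ∂μ) ^ (1/r) + (∫⁻ x, (‖f x‖₊ : ℝ≥0∞) ^ r ∂μ) ^ (1/r) := by
        gcongr
        exact hψle _
    _ = (∫⁻ x, (‖f x‖₊ : ℝ≥0∞) ^ r ∂μ) ^ (1/r) + (∫⁻ x, (‖g x‖₊ : ℝ≥0∞) ^ r ∂μ) ^ (1/r) :=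
        add_comm _ _

lemma volume_pair01 : volume ({0,1} : Set ℝ) = 0 :=
  ((Set.finite_singleton 1).insert 0).measure_zero _

lemma volume_frontier_Ysq : volume (frontier Ysq) = 0 := by
  rw [Ysq, frontier_prod_eq]
  refine measure_union_null ?_ ?_ <;>
    rw [MeasureTheory.Measure.volume_eq_prod, Measure.prod_prod,
        frontier_Ioo zero_lt_one] <;>
    simp [volume_pair01]

lemma volume_Ysq : volume Ysq = 1 := by
  rw [Ysq, MeasureTheory.Measure.volume_eq_prod, Measure.prod_prod, Real.volume_Ioo]
  norm_num

lemma isPA_zero : IsPA Ysq (fun _ => (0:V3)) := by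
  refine ⟨continuousOn_const, 1, fun _ => Ysq, fun _ => 0, ?_, ?_, ?_, ?_⟩
  · exact fun _ => ⟨(isOpen_Ioo.prod isOpen_Ioo), subset_rfl, volume_frontier_Ysq⟩
  · exact fun i j hij => absurd (Subsingleton.elim i j) hij
  · rw [Set.iUnion_const]; simp
  · intro i x _
    simp [fderiv_const]

lemma ZW_le (W₀ : ((ℝ × ℝ) →L[ℝ] V3) → ℝ≥0∞) (ξ : (ℝ × ℝ) →L[ℝ] V3) :
    ZW W₀ ξ ≤ W₀ ξ := by
  have h := iInf₂_le (f := fun (φ : ℝ × ℝ → V3)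
      (_ : IsPA Ysq φ ∧ ∀ x ∈ frontier Ysq, φ x = 0) =>
        ∫⁻ y in Ysq, W₀ (ξ + fderiv ℝ φ y))
    (fun _ => (0:V3)) ⟨isPA_zero, fun _ _ => rfl⟩
  refine le_trans h ?_
  have heq : ∀ y : ℝ × ℝ, W₀ (ξ + fderiv ℝ (fun _ => (0:V3)) y) = W₀ ξ := by
    intro y; rw [fderiv_fun_const]; simp
  simp only [heq]
  rw [setLIntegral_const, volume_Ysq, mul_one]

end Aux

/-- if `𝓘̄(v) ≤ ∫_S ZW₀(∇v)` for every piecewise affine `v`, then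
`𝓘̄ = 𝓙`. -/
theorem stmt17 (p C : ℝ) (hp : 1 < p) (hC : 0 < C) (S : Set (ℝ × ℝ)) (hS : IsOpen S)
    (hSb : Bornology.IsBounded S) (W₀ : ((ℝ × ℝ) →L[ℝ] V3) → ℝ≥0∞)
    (hcoer : ∀ ξ, ENNReal.ofReal (C * ‖ξ‖ ^ p) ≤ W₀ ξ)
    (hmain : ∀ v : ℝ × ℝ → V3, IsPA S v →
      RelaxI S W₀ p v ≤ ∫⁻ x in S, ZW W₀ (fderiv ℝ v x)) :
    ∀ v : ℝ × ℝ → V3, RelaxI S W₀ p v = Jfun S W₀ p v := by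
  intro v
  have hp0 : (0:ℝ) < p := lt_trans zero_lt_one hp
  have hq0 : ENNReal.ofReal p ≠ 0 := by
    simp [ENNReal.ofReal_eq_zero, not_le, hp0]
  have hqt : ENNReal.ofReal p ≠ ⊤ := ENNReal.ofReal_ne_top
  have hq1 : 1 ≤ (ENNReal.ofReal p).toReal := by
    rw [ENNReal.toReal_ofReal hp0.le]; exact hp.le
  refine le_antisymm ?_ ?_
  · -- `𝓘̄ ≤ 𝓙`
    rw [Jfun]
    refine le_iInf₂ (fun vs hvs => ?_)
    obtain ⟨hPA, htend⟩ := hvs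
    set L := Filter.liminf (fun n => ∫⁻ x in S, ZW W₀ (fderiv ℝ (vs n) x)) Filter.atTop with hLdef
    by_cases hL : L = ⊤
    · rw [hL]; exact le_top
    obtain ⟨φ, hφ1, hφ2⟩ := exists_subseq_lt _ L hL le_rfl
    have key : ∀ k : ℕ, ∃ u : ℝ × ℝ → V3,
        Ifun S W₀ u < L + (↑(k+1):ℝ≥0∞)⁻¹ ∧
        eLpNorm (fun x => u x - vs (φ k) x) (ENNReal.ofReal p) (volume.restrict S)
          < (↑(k+1):ℝ≥0∞)⁻¹ := by
      intro k
      have h1 : RelaxI S W₀ p (vs (φ k)) < L + (↑(k+1):ℝ≥0∞)⁻¹ :=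
        (hmain _ (hPA (φ k))).trans_lt (hφ2 k)
      rw [RelaxI] at h1
      obtain ⟨w, hw⟩ := iInf_lt_iff.mp h1
      have hwt : LpTendsto S p w (vs (φ k)) := by
        by_contra hcon
        rw [iInf_neg hcon] at hw
        exact not_top_lt hw
      rw [iInf_pos hwt] at hw
      have hfreq := Filter.frequently_lt_of_liminf_lt (h := hw)
      rw [LpTendsto] at hwt
      have hev : ∀ᶠ j in Filter.atTop,
          eLpNorm (fun x => w j x - vs (φ k) x) (ENNReal.ofReal p) (volume.restrict S)
            < (↑(k+1):ℝ≥0∞)⁻¹ :=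
        hwt.eventually_lt_const (inv_succ_pos k)
      obtain ⟨j, hj1, hj2⟩ := (hfreq.and_eventually hev).exists
      exact ⟨w j, hj1, hj2⟩
    choose u hu1 hu2 using key
    have htop : ∀ k : ℕ, L + (↑(k+1):ℝ≥0∞)⁻¹ < ⊤ := fun k =>
      ENNReal.add_lt_top.mpr ⟨lt_top_iff_ne_top.mpr hL,
        ENNReal.inv_lt_top.mpr (by exact_mod_cast Nat.succ_pos k)⟩
    have hPAu : ∀ k, IsPA S (u k) := by
      intro k
      by_contra hcon
      have h1 : Ifun S W₀ (u k) = ⊤ := by rw [Ifun, if_neg hcon]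
      exact not_top_lt (h1 ▸ (hu1 k).trans (htop k))
    have hLp : LpTendsto S p u v := by
      rw [LpTendsto]
      have hb : Filter.Tendsto
          (fun k => eLpNorm (fun x => vs (φ k) x - v x) (ENNReal.ofReal p) (volume.restrict S))
          Filter.atTop (nhds 0) := htend.comp hφ1.tendsto_atTop
      refine tendsto_of_tendsto_of_tendsto_of_le_of_le (g := fun _ => (0:ℝ≥0∞))
        (h := fun k : ℕ => ((k+1 : ℕ) : ℝ≥0∞)⁻¹ +
          eLpNorm (fun x => vs (φ k) x - v x) (ENNReal.ofReal p) (volume.restrict S))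
        tendsto_const_nhds (by simpa using tendsto_inv_succ.add hb)
        (fun k => zero_le) (fun k => ?_)
      have heq : (fun x => u k x - v x)
          = fun x => (u k x - vs (φ k) x) + (vs (φ k) x - v x) := by
        funext x; rw [sub_add_sub_cancel]
      rw [heq]
      have hmeas : AEStronglyMeasurable (fun x => u k x - vs (φ k) x) (volume.restrict S) :=
        ((hPAu k).1.sub (hPA (φ k)).1).aestronglyMeasurable hS.measurableSet
      exact (eLpNorm_triangle_left hq0 hqt hq1 _ _ hmeas).trans
        (add_le_add (hu2 k).le le_rfl)
    have hfinal : RelaxI S W₀ p v ≤ Filter.liminf (fun k => Ifun S W₀ (u k)) Filter.atTop := by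
      rw [RelaxI]
      exact iInf₂_le u hLp
    exact hfinal.trans (liminf_le_of_le_add_inv _ _ (fun k => (hu1 k).le))
  · -- `𝓙 ≤ 𝓘̄`
    rw [RelaxI]
    refine le_iInf₂ (fun vs htend => ?_)
    set L := Filter.liminf (fun n => Ifun S W₀ (vs n)) Filter.atTop with hLdef
    by_cases hL : L = ⊤
    · rw [hL]; exact le_top
    obtain ⟨φ, hφ1, hφ2⟩ := exists_subseq_lt _ L hL le_rfl
    have htop : ∀ k : ℕ, L + (↑(k+1):ℝ≥0∞)⁻¹ < ⊤ := fun k =>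
      ENNReal.add_lt_top.mpr ⟨lt_top_iff_ne_top.mpr hL,
        ENNReal.inv_lt_top.mpr (by exact_mod_cast Nat.succ_pos k)⟩
    have hPAk : ∀ k, IsPA S (vs (φ k)) := by
      intro k
      by_contra hcon
      have h1 : Ifun S W₀ (vs (φ k)) = ⊤ := by rw [Ifun, if_neg hcon]
      exact not_top_lt (h1 ▸ (hφ2 k).trans (htop k))
    have hJ : Jfun S W₀ p v
        ≤ Filter.liminf (fun k => ∫⁻ x in S, ZW W₀ (fderiv ℝ (vs (φ k)) x)) Filter.atTop := by
      rw [Jfun]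
      exact iInf₂_le (fun k => vs (φ k)) ⟨hPAk, htend.comp hφ1.tendsto_atTop⟩
    refine hJ.trans (liminf_le_of_le_add_inv _ _ (fun k => ?_))
    have h2 : ∫⁻ x in S, ZW W₀ (fderiv ℝ (vs (φ k)) x) ≤ Ifun S W₀ (vs (φ k)) := by
      rw [Ifun, if_pos (hPAk k)]
      exact lintegral_mono fun x => ZW_le W₀ _
    exact h2.trans (hφ2 k).le
end
end
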